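/- For the single-armed hidden-Markov bandit with subsidy (either the rested or the restless model), for every fixed belief π ∈ [0,1], each of the functions w ↦ V_S(π; w), w ↦ V_NS(π; w), w ↦ Ṽ_S(π; w), w ↦ Ṽ_NS(π; w), w ↦ V(π; w) and w ↦ Ṽ(π; w) is nondecreasing and convex in the subsidy w ∈ ℝ. -/

import Mathlib

/-!
Single-armed hidden-Markov bandit with subsidy (rested or restless model).

`θ a y π` is the availability probability `θ^a(π, y)` where `a` is the action
(`true` = play), `y` is the current availability (`true` = available), and `π`
is the belief (probability that the hidden state is 0).
-/

structure BanditParams where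
  /-- `true` for the rested model, `false` for the restless model. -/
  rested : Bool
  β : ℝ
  η0 : ℝ
  r0 : ℝ
  η1 : ℝ
  r1 : ℝ
  μ0 : ℝ
  μ1 : ℝ
  θ : Bool → Bool → ℝ → ℝ

namespace BanditParams

variable (P : BanditParams)

/-- Expected immediate reward (= success probability) when playing an available arm. -/
noncomputable def ρ (π : ℝ) : ℝ := π * P.r0 + (1 - π) * P.r1

/-- Expected immediate reward when playing an unavailable arm. -/
noncomputable def ξ (π : ℝ) : ℝ := π * P.η0 + (1 - π) * P.η1

/-- Bayes belief update after a successful play of an available arm. -/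
noncomputable def γ11 (π : ℝ) : ℝ :=
  (π * P.r0 * P.μ0 + (1 - π) * P.r1 * P.μ1) / (π * P.r0 + (1 - π) * P.r1)

/-- Bayes belief update after an unsuccessful play of an available arm. -/
noncomputable def γ01 (π : ℝ) : ℝ :=
  (π * (1 - P.r0) * P.μ0 + (1 - π) * (1 - P.r1) * P.μ1) /
    (π * (1 - P.r0) + (1 - π) * (1 - P.r1))

/-- Belief update after a successful play of an unavailable arm. -/
noncomputable def γ10 (π : ℝ) : ℝ := if P.rested then π else P.γ11 π

/-- Belief update after an unsuccessful play of an unavailable arm. -/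
noncomputable def γ00 (π : ℝ) : ℝ := if P.rested then π else P.γ01 π

/-- Belief update when an available arm is not played. -/
noncomputable def Γ1 (π : ℝ) : ℝ := if P.rested then π else π * P.μ0 + (1 - π) * P.μ1

/-- Belief update when an unavailable arm is not played. -/
noncomputable def Γ0 (_P : BanditParams) (π : ℝ) : ℝ := π

/-- Standing assumptions on the model parameters. -/
structure Valid : Prop where
  hβ0 : 0 < P.β
  hβ1 : P.β < 1
  hη0 : 0 ≤ P.η0
  hη0r0 : P.η0 < P.r0
  hr0η1 : P.r0 < P.η1
  hη1r1 : P.η1 < P.r1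
  hr1 : P.r1 ≤ 1
  hμ0 : P.μ0 ∈ Set.Icc (0 : ℝ) 1
  hμ1 : P.μ1 ∈ Set.Icc (0 : ℝ) 1
  hθ : ∀ a y π, π ∈ Set.Icc (0 : ℝ) 1 → P.θ a y π ∈ Set.Icc (0 : ℝ) 1

/-- `VS, VNS, VtS, VtNS, V, Vt` form the (unique bounded) solution of the dynamic
program for subsidy `w`: `VS = V_S`, `VNS = V_NS`, `VtS = Ṽ_S`, `VtNS = Ṽ_NS`,
`V = max (V_S, V_NS)`, `Vt = max (Ṽ_S, Ṽ_NS)`. -/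
structure IsSolution (w : ℝ) (VS VNS VtS VtNS V Vt : ℝ → ℝ) : Prop where
  bounded : ∃ M, ∀ π ∈ Set.Icc (0 : ℝ) 1, |V π| ≤ M ∧ |Vt π| ≤ M
  eqVS : ∀ π ∈ Set.Icc (0 : ℝ) 1, VS π =
    P.ρ π + P.β * (P.ρ π * (P.θ true true π * V (P.γ11 π)
        + (1 - P.θ true true π) * Vt (P.γ11 π))
      + (1 - P.ρ π) * (P.θ true true π * V (P.γ01 π)
        + (1 - P.θ true true π) * Vt (P.γ01 π)))
  eqVNS : ∀ π ∈ Set.Icc (0 : ℝ) 1, VNS π =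
    w + P.β * (P.θ false true π * V (P.Γ1 π) + (1 - P.θ false true π) * Vt (P.Γ1 π))
  eqVtS : ∀ π ∈ Set.Icc (0 : ℝ) 1, VtS π =
    P.ξ π + P.β * (P.ρ π * (P.θ true false π * V (P.γ10 π)
        + (1 - P.θ true false π) * Vt (P.γ10 π))
      + (1 - P.ρ π) * (P.θ true false π * V (P.γ00 π)
        + (1 - P.θ true false π) * Vt (P.γ00 π)))
  eqVtNS : ∀ π ∈ Set.Icc (0 : ℝ) 1, VtNS π =
    w + P.β * (P.θ false false π * V (P.Γ0 π) + (1 - P.θ false false π) * Vt (P.Γ0 π))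
  eqV : ∀ π ∈ Set.Icc (0 : ℝ) 1, V π = max (VS π) (VNS π)
  eqVt : ∀ π ∈ Set.Icc (0 : ℝ) 1, Vt π = max (VtS π) (VtNS π)

end BanditParams

open Set BanditParams

/-!
Fix weights `a, b ≥ 0` with `a + b = 1` and subsidies `w ≤ a w₁ + b w₂`, and call
`F w - (a F w₁ + b F w₂)` the defect of a function `F` of the subsidy. The dynamic program is
affine in the continuation values, with convex weights, and the subsidy enters only as the
immediate reward of not playing; so the defects of `V_S, V_NS, Ṽ_S, Ṽ_NS` are at most `β d`,
where `d` bounds the defects of `V` and `Ṽ` at all beliefs, and taking maxima the same holds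
for `V` and `Ṽ`. As the value functions are bounded, the supremum `d` of these defects satisfies
`d ≤ β d`, hence `d ≤ 0`. A nonpositive defect for all such data is exactly monotonicity
together with convexity.
-/

structure LeConvexComb where
  a : ℝ
  b : ℝ
  w : ℝ
  w₁ : ℝ
  w₂ : ℝ
  a_nonneg : 0 ≤ a
  b_nonneg : 0 ≤ b
  a_add_b : a + b = 1
  le_comb : w ≤ a * w₁ + b * w₂

namespace LeConvexComb

variable (c : LeConvexComb)

def defect (g : ℝ → ℝ) : ℝ := g c.w - (c.a * g c.w₁ + c.b * g c.w₂)

theorem defect_id_nonpos : c.defect id ≤ 0 :=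
  sub_nonpos.2 c.le_comb

theorem defect_max_le (f g : ℝ → ℝ) :
    c.defect (fun w => max (f w) (g w)) ≤ max (c.defect f) (c.defect g) := by
  have hf := add_le_add (mul_le_mul_of_nonneg_left (le_max_left (f c.w₁) (g c.w₁)) c.a_nonneg)
    (mul_le_mul_of_nonneg_left (le_max_left (f c.w₂) (g c.w₂)) c.b_nonneg)
  have hg := add_le_add (mul_le_mul_of_nonneg_left (le_max_right (f c.w₁) (g c.w₁)) c.a_nonneg)
    (mul_le_mul_of_nonneg_left (le_max_right (f c.w₂) (g c.w₂)) c.b_nonneg)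
  simp only [defect]
  rcases le_total (f c.w) (g c.w) with h | h
  · rw [max_eq_right h]
    exact le_max_of_le_right (by linarith)
  · rw [max_eq_left h]
    exact le_max_of_le_left (by linarith)

theorem defect_le_of_abs_le {g : ℝ → ℝ} {M M₁ M₂ : ℝ} (h : |g c.w| ≤ M) (h₁ : |g c.w₁| ≤ M₁)
    (h₂ : |g c.w₂| ≤ M₂) : c.defect g ≤ M + c.a * M₁ + c.b * M₂ := by
  have := mul_le_mul_of_nonneg_left (neg_le_of_abs_le h₁) c.a_nonneg
  have := mul_le_mul_of_nonneg_left (neg_le_of_abs_le h₂) c.b_nonneg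
  unfold defect
  linarith [le_of_abs_le h]

end LeConvexComb

theorem monotone_convexOn_of_forall_defect_nonpos {g : ℝ → ℝ}
    (h : ∀ c : LeConvexComb, c.defect g ≤ 0) : Monotone g ∧ ConvexOn ℝ univ g := by
  constructor
  · intro u v huv
    have := h ⟨1, 0, u, v, v, zero_le_one, le_rfl, add_zero 1, by linarith⟩
    simp only [LeConvexComb.defect] at this
    linarith
  · refine ⟨convex_univ, fun x _ y _ p q hp hq hpq => ?_⟩
    have := h ⟨p, q, p * x + q * y, x, y, hp, hq, hpq, le_rfl⟩
    simp only [LeConvexComb.defect, smul_eq_mul] at this ⊢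
    linarith

theorem Convex.mix_mem {s : Set ℝ} (hs : Convex ℝ s) {t x y : ℝ} (ht : t ∈ Icc (0 : ℝ) 1)
    (hx : x ∈ s) (hy : y ∈ s) : t * x + (1 - t) * y ∈ s :=
  hs hx hy ht.1 (sub_nonneg.2 ht.2) (add_sub_cancel t 1)

theorem mix_le {t x y d : ℝ} (ht : t ∈ Icc (0 : ℝ) 1) (hx : x ≤ d) (hy : y ≤ d) :
    t * x + (1 - t) * y ≤ d :=
  (convex_Iic d).mix_mem ht hx hy

theorem weightedAvg_mem_Icc {p q x y : ℝ} (hp : 0 ≤ p) (hq : 0 ≤ q) (hx : x ∈ Icc (0 : ℝ) 1)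
    (hy : y ∈ Icc (0 : ℝ) 1) : (p * x + q * y) / (p + q) ∈ Icc (0 : ℝ) 1 := by
  rcases (add_nonneg hp hq).eq_or_lt with hpq | hpq
  · simp [← hpq] -- junk value `_ / 0 = 0`
  · refine ⟨div_nonneg (by nlinarith [hx.1, hy.1]) hpq.le, (div_le_one hpq).2 ?_⟩
    nlinarith [hx.2, hy.2]

namespace BanditParams

variable {P : BanditParams} {π : ℝ}

namespace Valid

theorem r0_mem (hP : P.Valid) : P.r0 ∈ Icc (0 : ℝ) 1 :=
  ⟨hP.hη0.trans hP.hη0r0.le, (hP.hr0η1.trans hP.hη1r1).le.trans hP.hr1⟩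

theorem r1_mem (hP : P.Valid) : P.r1 ∈ Icc (0 : ℝ) 1 :=
  ⟨hP.r0_mem.1.trans (hP.hr0η1.trans hP.hη1r1).le, hP.hr1⟩

theorem ρ_mem (hP : P.Valid) (hπ : π ∈ Icc (0 : ℝ) 1) : P.ρ π ∈ Icc (0 : ℝ) 1 :=
  (convex_Icc 0 1).mix_mem hπ hP.r0_mem hP.r1_mem

theorem γ11_mem (hP : P.Valid) (hπ : π ∈ Icc (0 : ℝ) 1) : P.γ11 π ∈ Icc (0 : ℝ) 1 :=
  weightedAvg_mem_Icc (mul_nonneg hπ.1 hP.r0_mem.1) (mul_nonneg (sub_nonneg.2 hπ.2) hP.r1_mem.1)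
    hP.hμ0 hP.hμ1

theorem γ01_mem (hP : P.Valid) (hπ : π ∈ Icc (0 : ℝ) 1) : P.γ01 π ∈ Icc (0 : ℝ) 1 :=
  weightedAvg_mem_Icc (mul_nonneg hπ.1 (sub_nonneg.2 hP.r0_mem.2))
    (mul_nonneg (sub_nonneg.2 hπ.2) (sub_nonneg.2 hP.r1_mem.2)) hP.hμ0 hP.hμ1

theorem γ10_mem (hP : P.Valid) (hπ : π ∈ Icc (0 : ℝ) 1) : P.γ10 π ∈ Icc (0 : ℝ) 1 := by
  unfold γ10
  split
  exacts [hπ, hP.γ11_mem hπ]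

theorem γ00_mem (hP : P.Valid) (hπ : π ∈ Icc (0 : ℝ) 1) : P.γ00 π ∈ Icc (0 : ℝ) 1 := by
  unfold γ00
  split
  exacts [hπ, hP.γ01_mem hπ]

theorem Γ1_mem (hP : P.Valid) (hπ : π ∈ Icc (0 : ℝ) 1) : P.Γ1 π ∈ Icc (0 : ℝ) 1 := by
  unfold Γ1
  split
  exacts [hπ, (convex_Icc 0 1).mix_mem hπ hP.hμ0 hP.hμ1]

end Valid

variable {VS VNS VtS VtNS V Vt : ℝ → ℝ → ℝ}

theorem defect_VS (hsol : ∀ w, P.IsSolution w (VS w) (VNS w) (VtS w) (VtNS w) (V w) (Vt w))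
    (c : LeConvexComb) (hπ : π ∈ Icc (0 : ℝ) 1) :
    c.defect (VS · π) =
      P.β * (P.ρ π * (P.θ true true π * c.defect (V · (P.γ11 π))
          + (1 - P.θ true true π) * c.defect (Vt · (P.γ11 π)))
        + (1 - P.ρ π) * (P.θ true true π * c.defect (V · (P.γ01 π))
          + (1 - P.θ true true π) * c.defect (Vt · (P.γ01 π)))) := by
  simp only [LeConvexComb.defect]
  rw [(hsol c.w).eqVS π hπ, (hsol c.w₁).eqVS π hπ, (hsol c.w₂).eqVS π hπ]
  linear_combination (-P.ρ π) * c.a_add_b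

theorem defect_VNS (hsol : ∀ w, P.IsSolution w (VS w) (VNS w) (VtS w) (VtNS w) (V w) (Vt w))
    (c : LeConvexComb) (hπ : π ∈ Icc (0 : ℝ) 1) :
    c.defect (VNS · π) = c.defect id
      + P.β * (P.θ false true π * c.defect (V · (P.Γ1 π))
        + (1 - P.θ false true π) * c.defect (Vt · (P.Γ1 π))) := by
  simp only [LeConvexComb.defect, id]
  rw [(hsol c.w).eqVNS π hπ, (hsol c.w₁).eqVNS π hπ, (hsol c.w₂).eqVNS π hπ]
  ring

theorem defect_VtS (hsol : ∀ w, P.IsSolution w (VS w) (VNS w) (VtS w) (VtNS w) (V w) (Vt w))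
    (c : LeConvexComb) (hπ : π ∈ Icc (0 : ℝ) 1) :
    c.defect (VtS · π) =
      P.β * (P.ρ π * (P.θ true false π * c.defect (V · (P.γ10 π))
          + (1 - P.θ true false π) * c.defect (Vt · (P.γ10 π)))
        + (1 - P.ρ π) * (P.θ true false π * c.defect (V · (P.γ00 π))
          + (1 - P.θ true false π) * c.defect (Vt · (P.γ00 π)))) := by
  simp only [LeConvexComb.defect]
  rw [(hsol c.w).eqVtS π hπ, (hsol c.w₁).eqVtS π hπ, (hsol c.w₂).eqVtS π hπ]
  linear_combination (-P.ξ π) * c.a_add_b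

theorem defect_VtNS (hsol : ∀ w, P.IsSolution w (VS w) (VNS w) (VtS w) (VtNS w) (V w) (Vt w))
    (c : LeConvexComb) (hπ : π ∈ Icc (0 : ℝ) 1) :
    c.defect (VtNS · π) = c.defect id
      + P.β * (P.θ false false π * c.defect (V · (P.Γ0 π))
        + (1 - P.θ false false π) * c.defect (Vt · (P.Γ0 π))) := by
  simp only [LeConvexComb.defect, id]
  rw [(hsol c.w).eqVtNS π hπ, (hsol c.w₁).eqVtNS π hπ, (hsol c.w₂).eqVtNS π hπ]
  ring

theorem le_zero_of_le_mul_of_bounded {α : Type*} {s : Set α} {f : α → ℝ} {β M₀ : ℝ}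
    (hβ : β < 1) (hbdd : ∀ x ∈ s, f x ≤ M₀)
    (h : ∀ d, (∀ x ∈ s, f x ≤ d) → ∀ x ∈ s, f x ≤ β * d) : ∀ x ∈ s, f x ≤ 0 := by
  intro x hx
  have hbdd' : BddAbove (f '' s) := ⟨M₀, forall_mem_image.2 hbdd⟩
  have hle : ∀ y ∈ s, f y ≤ sSup (f '' s) := fun y hy => le_csSup hbdd' (mem_image_of_mem f hy)
  have hsup : sSup (f '' s) ≤ β * sSup (f '' s) :=
    csSup_le ⟨f x, mem_image_of_mem f hx⟩ (forall_mem_image.2 (h _ hle))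
  have : sSup (f '' s) ≤ 0 := by nlinarith
  exact (hle x hx).trans this

theorem defect_components_le (hP : P.Valid)
    (hsol : ∀ w, P.IsSolution w (VS w) (VNS w) (VtS w) (VtNS w) (V w) (Vt w))
    (c : LeConvexComb) {d : ℝ} (hV : ∀ γ ∈ Icc (0 : ℝ) 1, c.defect (V · γ) ≤ d)
    (hVt : ∀ γ ∈ Icc (0 : ℝ) 1, c.defect (Vt · γ) ≤ d) (hπ : π ∈ Icc (0 : ℝ) 1) :
    c.defect (VS · π) ≤ P.β * d ∧ c.defect (VNS · π) ≤ P.β * d ∧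
      c.defect (VtS · π) ≤ P.β * d ∧ c.defect (VtNS · π) ≤ P.β * d := by
  have hβ := hP.hβ0.le
  have next : ∀ a y : Bool, ∀ γ ∈ Icc (0 : ℝ) 1,
      P.θ a y π * c.defect (V · γ) + (1 - P.θ a y π) * c.defect (Vt · γ) ≤ d :=
    fun a y γ hγ => mix_le (hP.hθ a y π hπ) (hV γ hγ) (hVt γ hγ)
  refine ⟨?_, ?_, ?_, ?_⟩
  · rw [defect_VS hsol c hπ]
    exact mul_le_mul_of_nonneg_left (mix_le (hP.ρ_mem hπ)
      (next true true _ (hP.γ11_mem hπ)) (next true true _ (hP.γ01_mem hπ))) hβ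
  · rw [defect_VNS hsol c hπ]
    linarith [c.defect_id_nonpos, mul_le_mul_of_nonneg_left (next false true _ (hP.Γ1_mem hπ)) hβ]
  · rw [defect_VtS hsol c hπ]
    exact mul_le_mul_of_nonneg_left (mix_le (hP.ρ_mem hπ)
      (next true false _ (hP.γ10_mem hπ)) (next true false _ (hP.γ00_mem hπ))) hβ
  · rw [defect_VtNS hsol c hπ]
    linarith [c.defect_id_nonpos, mul_le_mul_of_nonneg_left (next false false (P.Γ0 π) hπ) hβ]

theorem defect_V_le_max (hsol : ∀ w, P.IsSolution w (VS w) (VNS w) (VtS w) (VtNS w) (V w) (Vt w))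
    (c : LeConvexComb) (hπ : π ∈ Icc (0 : ℝ) 1) :
    c.defect (V · π) ≤ max (c.defect (VS · π)) (c.defect (VNS · π)) := by
  rw [show (V · π) = fun w => max (VS w π) (VNS w π) from funext fun w => (hsol w).eqV π hπ]
  exact c.defect_max_le _ _

theorem defect_Vt_le_max (hsol : ∀ w, P.IsSolution w (VS w) (VNS w) (VtS w) (VtNS w) (V w) (Vt w))
    (c : LeConvexComb) (hπ : π ∈ Icc (0 : ℝ) 1) :
    c.defect (Vt · π) ≤ max (c.defect (VtS · π)) (c.defect (VtNS · π)) := by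
  rw [show (Vt · π) = fun w => max (VtS w π) (VtNS w π) from funext fun w => (hsol w).eqVt π hπ]
  exact c.defect_max_le _ _

theorem defect_values_nonpos (hP : P.Valid)
    (hsol : ∀ w, P.IsSolution w (VS w) (VNS w) (VtS w) (VtNS w) (V w) (Vt w))
    (c : LeConvexComb) : ∀ γ ∈ Icc (0 : ℝ) 1, c.defect (V · γ) ≤ 0 ∧ c.defect (Vt · γ) ≤ 0 := by
  obtain ⟨M, hM⟩ := (hsol c.w).bounded
  obtain ⟨M₁, hM₁⟩ := (hsol c.w₁).bounded
  obtain ⟨M₂, hM₂⟩ := (hsol c.w₂).bounded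
  have hbdd : ∀ γ ∈ Icc (0 : ℝ) 1,
      max (c.defect (V · γ)) (c.defect (Vt · γ)) ≤ M + c.a * M₁ + c.b * M₂ := fun γ hγ =>
    max_le (c.defect_le_of_abs_le (hM γ hγ).1 (hM₁ γ hγ).1 (hM₂ γ hγ).1)
      (c.defect_le_of_abs_le (hM γ hγ).2 (hM₁ γ hγ).2 (hM₂ γ hγ).2)
  have step : ∀ d, (∀ γ ∈ Icc (0 : ℝ) 1, max (c.defect (V · γ)) (c.defect (Vt · γ)) ≤ d) →
      ∀ γ ∈ Icc (0 : ℝ) 1, max (c.defect (V · γ)) (c.defect (Vt · γ)) ≤ P.β * d := by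
    intro d hd γ hγ
    obtain ⟨hS, hNS, htS, htNS⟩ := defect_components_le hP hsol c
      (fun γ hγ => (max_le_iff.1 (hd γ hγ)).1) (fun γ hγ => (max_le_iff.1 (hd γ hγ)).2) hγ
    exact max_le ((defect_V_le_max hsol c hγ).trans (max_le hS hNS))
      ((defect_Vt_le_max hsol c hγ).trans (max_le htS htNS))
  exact fun γ hγ => max_le_iff.1 (le_zero_of_le_mul_of_bounded hP.hβ1 hbdd step γ hγ)

theorem defect_all_nonpos (hP : P.Valid)
    (hsol : ∀ w, P.IsSolution w (VS w) (VNS w) (VtS w) (VtNS w) (V w) (Vt w))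
    (c : LeConvexComb) (hπ : π ∈ Icc (0 : ℝ) 1) :
    c.defect (VS · π) ≤ 0 ∧ c.defect (VNS · π) ≤ 0 ∧ c.defect (VtS · π) ≤ 0 ∧
      c.defect (VtNS · π) ≤ 0 ∧ c.defect (V · π) ≤ 0 ∧ c.defect (Vt · π) ≤ 0 := by
  have hvalues := defect_values_nonpos hP hsol c
  obtain ⟨hS, hNS, htS, htNS⟩ := defect_components_le hP hsol c
    (fun γ hγ => (hvalues γ hγ).1) (fun γ hγ => (hvalues γ hγ).2) hπ
  rw [mul_zero] at hS hNS htS htNS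
  exact ⟨hS, hNS, htS, htNS, hvalues π hπ⟩

end BanditParams

/-- For every fixed belief `π ∈ [0,1]`, each of the six value functions
is nondecreasing and convex as a function of the subsidy `w ∈ ℝ`. -/
theorem monotone_convex_in_subsidy (P : BanditParams) (hP : P.Valid)
    (VS VNS VtS VtNS V Vt : ℝ → ℝ → ℝ)
    (hsol : ∀ w : ℝ, P.IsSolution w (VS w) (VNS w) (VtS w) (VtNS w) (V w) (Vt w))
    (π : ℝ) (hπ : π ∈ Icc (0 : ℝ) 1) :
    (Monotone (fun w => VS w π) ∧ ConvexOn ℝ univ (fun w => VS w π)) ∧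
      (Monotone (fun w => VNS w π) ∧ ConvexOn ℝ univ (fun w => VNS w π)) ∧
      (Monotone (fun w => VtS w π) ∧ ConvexOn ℝ univ (fun w => VtS w π)) ∧
      (Monotone (fun w => VtNS w π) ∧ ConvexOn ℝ univ (fun w => VtNS w π)) ∧
      (Monotone (fun w => V w π) ∧ ConvexOn ℝ univ (fun w => V w π)) ∧
      (Monotone (fun w => Vt w π) ∧ ConvexOn ℝ univ (fun w => Vt w π)) := by
  have h := fun c => defect_all_nonpos hP hsol c hπ
  exact ⟨monotone_convexOn_of_forall_defect_nonpos fun c => (h c).1,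
    monotone_convexOn_of_forall_defect_nonpos fun c => (h c).2.1,
    monotone_convexOn_of_forall_defect_nonpos fun c => (h c).2.2.1,
    monotone_convexOn_of_forall_defect_nonpos fun c => (h c).2.2.2.1,
    monotone_convexOn_of_forall_defect_nonpos fun c => (h c).2.2.2.2.1,
    monotone_convexOn_of_forall_defect_nonpos fun c => (h c).2.2.2.2.2⟩
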